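/- arXiv:2110.02868 — 5 statements merged into one kernel-verified Lean document; each statement's English description precedes it below -/
import Mathlib

section
/- For any c > 0 and L̄ > 1, the function σ ↦ (1 - e^{-cσ}) + c(1-σ)e^{-cσ} - (c/L̄)e^{-cσ} on [0,1] attains its minimum at σ = 1 - 1/L̄, and the minimum value is 1 - e^{-c(1 - 1/L̄)}. -/
open Real

/-! With `s = 1 - 1 / L̄` the rate function is `1 - exp (-c σ) (1 + c (σ - s))`, and
`1 + y ≤ exp y` at `y = c (σ - s)` gives `exp (-c σ) (1 + c (σ - s)) ≤ exp (-c s)`, with equality at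
`σ = s`. -/

theorem exp_neg_mul_mul_one_add_mul_sub_le (a s x : ℝ) :
    exp (-a * x) * (1 + a * (x - s)) ≤ exp (-a * s) :=
  calc exp (-a * x) * (1 + a * (x - s))
      ≤ exp (-a * x) * exp (a * (x - s)) := by
        gcongr
        linarith [add_one_le_exp (a * (x - s))]
    _ = exp (-a * s) := by rw [← exp_add]; ring_nf

theorem stmt4_general (c Lb : ℝ) :
    IsMinOn (fun σ : ℝ => (1 - Real.exp (-c * σ)) + c * (1 - σ) * Real.exp (-c * σ) -
        (c / Lb) * Real.exp (-c * σ)) (Set.Icc 0 1) (1 - 1 / Lb) ∧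
    (1 - Real.exp (-c * (1 - 1 / Lb))) + c * (1 - (1 - 1 / Lb)) * Real.exp (-c * (1 - 1 / Lb)) -
        (c / Lb) * Real.exp (-c * (1 - 1 / Lb)) = 1 - Real.exp (-c * (1 - 1 / Lb)) := by
  set s := 1 - 1 / Lb
  have rate_eq : ∀ σ, (1 - exp (-c * σ)) + c * (1 - σ) * exp (-c * σ) - (c / Lb) * exp (-c * σ)
      = 1 - exp (-c * σ) * (1 + c * (σ - s)) := fun σ => by ring
  refine ⟨fun σ _ => ?_, by rw [rate_eq]; ring⟩
  simp only [Set.mem_ofPred_eq, rate_eq, sub_self, mul_zero, add_zero, mul_one]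
  linarith [exp_neg_mul_mul_one_add_mul_sub_le c s σ]

theorem stmt4 (c Lb : ℝ) (hc : 0 < c) (hL : 1 < Lb) :
    IsMinOn (fun σ : ℝ => (1 - Real.exp (-c * σ)) + c * (1 - σ) * Real.exp (-c * σ) -
        (c / Lb) * Real.exp (-c * σ)) (Set.Icc 0 1) (1 - 1 / Lb) ∧
    (1 - Real.exp (-c * (1 - 1 / Lb))) + c * (1 - (1 - 1 / Lb)) * Real.exp (-c * (1 - 1 / Lb)) -
        (c / Lb) * Real.exp (-c * (1 - 1 / Lb)) = 1 - Real.exp (-c * (1 - 1 / Lb)) :=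
  stmt4_general c Lb
end

section
/- Fix c > 0 and L̄ > 0, with L = L̄·log₂ n and K = c·n/L. For any constant γ₀ > -1/log₂(1 - e^{-c}), the quantity K·(1 - (1 - L/n)^{K-1})^{γ₀·log₂ n - 1} tends to 0 as n → ∞. -/
/-! Writing `y = c n / (L̄ log₂ n)`, the inner term `(1 - L/n) ^ (K - 1) = (1 - c/y) ^ (y - 1)`
tends to `e^{-c}`, so the base of the outer power tends to `β = 1 - e^{-c} ∈ (0, 1)`. Choosing
`β' > β` with `1 + γ₀ log₂ β' < 0`, the whole expression is eventually squeezed between `0` and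
`(c / (L̄ β')) · n ^ (1 + γ₀ log₂ β')`, which tends to `0`. -/

open Real Filter Topology

lemma tendsto_div_logb_atTop {a : ℝ} (ha : 1 < a) :
    Tendsto (fun x : ℝ => x / logb a x) atTop atTop := by
  have h : Tendsto (fun x : ℝ => logb a x / x) atTop (𝓝[>] 0) := by
    refine tendsto_nhdsWithin_iff.2 ⟨?_, ?_⟩
    · simpa using tendsto_pow_logb_div_mul_add_atTop (b := a) 1 0 1 one_ne_zero
    · filter_upwards [eventually_gt_atTop 1] with x hx
      exact div_pos (logb_pos ha hx) (zero_lt_one.trans hx)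
  exact h.inv_tendsto_nhdsGT_zero.congr fun x => by simp [inv_div]

lemma tendsto_one_add_div_rpow_sub_one_exp (t : ℝ) :
    Tendsto (fun x : ℝ => (1 + t / x) ^ (x - 1)) atTop (𝓝 (exp t)) := by
  have hbase : Tendsto (fun x : ℝ => 1 + t / x) atTop (𝓝 1) := by
    simpa using tendsto_const_nhds.add ((tendsto_const_nhds (x := t)).div_atTop tendsto_id)
  have h := (tendsto_one_add_div_rpow_exp t).div hbase one_ne_zero
  rw [div_one] at h
  refine h.congr' ?_
  filter_upwards [hbase.eventually (eventually_gt_nhds one_pos)] with x hx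
  rw [Pi.div_apply, rpow_sub hx, rpow_one]

lemma rpow_mul_logb_comm {a b x : ℝ} (hb : 0 < b) (hx : 0 < x) (γ : ℝ) :
    b ^ (γ * logb a x) = x ^ (γ * logb a b) := by
  rw [rpow_def_of_pos hb, rpow_def_of_pos hx, logb, logb]
  ring_nf

lemma tendsto_mul_rpow_mul_logb_sub_one_zero {α : Type*} {l : Filter α} {x y b : α → ℝ}
    {a C β γ : ℝ} (ha : 1 < a) (hx : Tendsto x l atTop) (hb : Tendsto b l (𝓝 β))
    (hβ : 0 < β) (hγ : 0 < γ) (hβγ : 1 + γ * logb a β < 0)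
    (hy : ∀ᶠ i in l, 0 ≤ y i ∧ y i ≤ C * x i) :
    Tendsto (fun i => y i * b i ^ (γ * logb a (x i) - 1)) l (𝓝 0) := by
  obtain ⟨β', hβ'γ, hββ'⟩ : ∃ β', 1 + γ * logb a β' < 0 ∧ β < β' := by
    have hcont : ContinuousAt (fun t => 1 + γ * logb a t) β :=
      continuousAt_const.add (continuousAt_const.mul (continuousAt_logb hβ.ne'))
    exact ((hcont.eventually (gt_mem_nhds hβγ)).filter_mono nhdsWithin_le_nhds
      |>.and self_mem_nhdsWithin).exists (f := 𝓝[>] β)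
  have hβ' : 0 < β' := hβ.trans hββ'
  have hbound : Tendsto (fun i => C / β' * x i ^ (1 + γ * logb a β')) l (𝓝 0) := by
    simpa using ((tendsto_rpow_neg_atTop (neg_pos.2 hβ'γ)).comp hx).const_mul (C / β')
  have hexp : Tendsto (fun i => γ * logb a (x i) - 1) l atTop :=
    tendsto_atTop_add_const_right _ _ (((tendsto_logb_atTop ha).comp hx).const_mul_atTop hγ)
  refine tendsto_of_tendsto_of_tendsto_of_le_of_le' tendsto_const_nhds hbound ?_ ?_
  · filter_upwards [hy, hb.eventually (eventually_gt_nhds hβ)] with i hyi hbi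
    exact mul_nonneg hyi.1 (rpow_nonneg hbi.le _)
  filter_upwards [hy, hb.eventually (eventually_gt_nhds hβ), hb.eventually (eventually_lt_nhds hββ'),
    hx.eventually (eventually_gt_atTop 0), hexp.eventually (eventually_ge_atTop 0)]
    with i ⟨hy0, hyC⟩ hb0 hbβ' hx0 he
  calc y i * b i ^ (γ * logb a (x i) - 1)
      ≤ C * x i * β' ^ (γ * logb a (x i) - 1) :=
        mul_le_mul hyC (rpow_le_rpow hb0.le hbβ'.le he) (rpow_nonneg hb0.le _) (hy0.trans hyC)
    _ = C / β' * x i ^ (1 + γ * logb a β') := by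
        rw [rpow_sub hβ', rpow_one, rpow_mul_logb_comm hβ' hx0, rpow_add hx0, rpow_one]
        ring

theorem stmt9 (c Lb γ₀ : ℝ) (hc : 0 < c) (hL : 0 < Lb)
    (hγ : γ₀ > -1 / Real.logb 2 (1 - Real.exp (-c))) :
    Tendsto (fun n : ℕ =>
      (c * n / (Lb * Real.logb 2 n)) *
        (1 - (1 - Lb * Real.logb 2 n / n) ^ (c * n / (Lb * Real.logb 2 n) - 1)) ^
          (γ₀ * Real.logb 2 n - 1))
      atTop (nhds 0) := by
  have hβ : 0 < 1 - exp (-c) := sub_pos.2 (exp_lt_one_iff.2 (neg_lt_zero.2 hc))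
  have hlogβ : logb 2 (1 - exp (-c)) < 0 := logb_neg one_lt_two hβ (sub_lt_self _ (exp_pos _))
  have hγ₀ : 0 < γ₀ := (div_pos_of_neg_of_neg neg_one_lt_zero hlogβ).trans hγ
  have hγβ : 1 + γ₀ * logb 2 (1 - exp (-c)) < 0 := by
    linarith [(div_lt_iff_of_neg hlogβ).1 hγ]
  set y : ℕ → ℝ := fun n => c * n / (Lb * logb 2 n)
  have hy : Tendsto y atTop atTop :=
    (((tendsto_div_logb_atTop one_lt_two).comp tendsto_natCast_atTop_atTop).const_mul_atTop
      (div_pos hc hL)).congr fun n => by simp [y, mul_div_mul_comm]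
  have hb : Tendsto (fun n : ℕ => 1 - (1 - Lb * logb 2 n / n) ^ (y n - 1)) atTop
      (𝓝 (1 - exp (-c))) := by
    refine (tendsto_const_nhds.sub
      ((tendsto_one_add_div_rpow_sub_one_exp (-c)).comp hy)).congr fun n => ?_
    simp only [Function.comp, y, div_div_eq_mul_div, neg_mul, neg_div,
      mul_div_mul_left _ _ hc.ne', ← sub_eq_add_neg]
  refine tendsto_mul_rpow_mul_logb_sub_one_zero one_lt_two tendsto_natCast_atTop_atTop hb hβ hγ₀
    hγβ (C := c / Lb) ?_
  filter_upwards [eventually_ge_atTop 2] with n hn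
  have hlog : 1 ≤ logb 2 (n : ℝ) := by
    rw [le_logb_iff_rpow_le one_lt_two (by positivity), rpow_one]
    exact_mod_cast hn
  refine ⟨by positivity, ?_⟩
  calc c * n / (Lb * logb 2 n) ≤ c * n / Lb :=
        div_le_div_of_nonneg_left (by positivity) hL (le_mul_of_one_le_right hL.le hlog)
    _ = c / Lb * n := by ring
end

section
/- Fix c > 0 and L̄ > 1, L = L̄·log₂ n, K = c·n/L. Let Φ be the fraction of positions i ∈ {1,...,n} of a circular length-n string that are covered by at least one of K reads of length L with independent uniform starting positions (position i is covered if some read starts in {i−L+1,...,i} mod n). Then for every ε > 0, P(|Φ − (1 − e^{−c})| > ε(1 − e^{−c})) → 0 as n → ∞. -/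
/-! A position is uncovered exactly when no read starts in the window of `L` positions ending at
it, so the number of uncovered positions is a sum of `n` indicators, each of probability
`(1 - L/n)^K → e^{-c}`. Avoiding two disjoint windows is harder than avoiding each of them
independently (`1 - 2x ≤ (1 - x)^2`), so only the at most `2L` pairs with overlapping windows
contribute positive covariance, and the variance of the uncovered fraction is at most
`2L/n = O(log n / n)`. Chebyshev's inequality concludes. -/

open MeasureTheory ProbabilityTheory Real Filter Finset Topology
open scoped ENNReal

section Avoidance

variable {Ω ι α : Type*} [MeasurableSpace Ω] {μ : Measure Ω} [Fintype ι]
  [Fintype α] [MeasurableSpace α] [DiscreteMeasurableSpace α] {T : ι → Ω → α}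

lemma measureReal_preimage_of_uniform [IsFiniteMeasure μ] {X : Ω → α} (hX : Measurable X)
    (hunif : ∀ t, μ {ω | X ω = t} = (Fintype.card α : ℝ≥0∞)⁻¹) (S : Finset α) :
    μ.real (X ⁻¹' S) = #S / Fintype.card α := by
  rw [measureReal_def, ← sum_measure_preimage_singleton S fun t _ ↦ hX (.of_discrete)]
  simp [Set.preimage, hunif, div_eq_mul_inv]

lemma measureReal_forall_notMem [IsProbabilityMeasure μ] [Nonempty α]
    (hmeas : ∀ k, Measurable (T k))
    (hunif : ∀ k t, μ {ω | T k ω = t} = (Fintype.card α : ℝ≥0∞)⁻¹) (hind : iIndepFun T μ)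
    (S : Finset α) :
    μ.real {ω | ∀ k, T k ω ∉ S} = (1 - #S / Fintype.card α : ℝ) ^ Fintype.card ι := by
  classical
  have h : {ω | ∀ k, T k ω ∉ S} = ⋂ k ∈ (univ : Finset ι), T k ⁻¹' ↑Sᶜ := by ext; simp
  rw [h, measureReal_def, hind.measure_inter_preimage_eq_mul _ fun _ _ ↦ .of_discrete,
    ENNReal.toReal_prod]
  simp_rw [← measureReal_def, measureReal_preimage_of_uniform (hmeas _) (hunif _), card_compl]
  rw [prod_const, card_univ, Nat.cast_sub (card_le_univ S)]
  field_simp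

lemma measureReal_forall_notMem_union_le [IsProbabilityMeasure μ] [Nonempty α] [DecidableEq α]
    (hmeas : ∀ k, Measurable (T k))
    (hunif : ∀ k t, μ {ω | T k ω = t} = (Fintype.card α : ℝ≥0∞)⁻¹) (hind : iIndepFun T μ)
    {S S' : Finset α} (hSS' : Disjoint S S') :
    μ.real {ω | ∀ k, T k ω ∉ S ∪ S'} ≤
      μ.real {ω | ∀ k, T k ω ∉ S} * μ.real {ω | ∀ k, T k ω ∉ S'} := by
  simp only [measureReal_forall_notMem hmeas hunif hind, ← mul_pow, card_union_of_disjoint hSS']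
  have hα : (0 : ℝ) < Fintype.card α := by positivity
  have hcard : ((#S + #S' : ℕ) : ℝ) ≤ Fintype.card α := by
    exact_mod_cast card_union_of_disjoint hSS' ▸ card_le_univ (S ∪ S')
  gcongr
  · rw [sub_nonneg, div_le_one hα]; exact hcard
  · push_cast
    have : 0 ≤ (#S / Fintype.card α : ℝ) * (#S' / Fintype.card α) := by positivity
    linarith [add_div (#S : ℝ) #S' (Fintype.card α)]

end Avoidance

section Covariance

variable {Ω ι : Type*} [MeasurableSpace Ω] {μ : Measure Ω} [IsProbabilityMeasure μ]

lemma memLp_indicator_one {A : Set Ω} (hA : MeasurableSet A) (p : ℝ≥0∞) :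
    MemLp (A.indicator (1 : Ω → ℝ)) p μ :=
  (memLp_const 1).indicator hA

lemma covariance_indicator_one {A B : Set Ω} (hA : MeasurableSet A) (hB : MeasurableSet B) :
    cov[A.indicator 1, B.indicator 1; μ] = μ.real (A ∩ B) - μ.real A * μ.real B := by
  rw [covariance_eq_sub (memLp_indicator_one hA 2) (memLp_indicator_one hB 2),
    ← Set.inter_indicator_one, integral_indicator_one (hA.inter hB), integral_indicator_one hA,
    integral_indicator_one hB]

lemma variance_sum_indicator_one_le [Fintype ι] {U : ι → Set Ω} (hU : ∀ i, MeasurableSet (U i))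
    (R : ι → ι → Prop) [DecidableRel R]
    (hR : ∀ i j, ¬R i j → μ.real (U i ∩ U j) ≤ μ.real (U i) * μ.real (U j)) :
    Var[fun ω ↦ ∑ i, (U i).indicator 1 ω; μ] ≤ ∑ i, (#{j | R i j} : ℝ) := by
  rw [variance_fun_sum fun i ↦ memLp_indicator_one (hU i) 2]
  refine sum_le_sum fun i _ ↦ ?_
  rw [← sum_boole]
  refine sum_le_sum fun j _ ↦ ?_
  rw [covariance_indicator_one (hU i) (hU j)]
  split_ifs with h
  · linarith [measureReal_le_one (μ := μ) (s := U i ∩ U j),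
      mul_nonneg (measureReal_nonneg (μ := μ) (s := U i)) (measureReal_nonneg (μ := μ) (s := U j))]
  · linarith [hR i j h]

end Covariance

section CoveringStarts

variable {n : ℕ} [NeZero n]

def coveringStarts (L : ℕ) (i : Fin n) : Finset (Fin n) := {t | (i - t).val < L}

lemma card_coveringStarts (L : ℕ) (i : Fin n) : #(coveringStarts L i) = min n L := by
  rw [← Fin.card_filter_val_lt]
  exact card_equiv (Equiv.subLeft i) fun t ↦ by simp [coveringStarts]

lemma card_filter_not_disjoint_coveringStarts_le (L : ℕ) (i : Fin n) :
    #{j | ¬Disjoint (coveringStarts L i) (coveringStarts L j)} ≤ 2 * L := by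
  have hsub : ({j | ¬Disjoint (coveringStarts L i) (coveringStarts L j)} : Finset (Fin n)) ⊆
      coveringStarts L i ∪ ({j | (j - i).val < L} : Finset (Fin n)) := by
    intro j hj
    simp only [mem_filter, mem_univ, true_and, not_disjoint_iff] at hj
    obtain ⟨t, hti, htj⟩ := hj
    simp only [coveringStarts, mem_filter, mem_univ, true_and, mem_union] at hti htj ⊢
    rcases le_total (i - t) (j - t) with h | h
    · right
      rw [show j - i = (j - t) - (i - t) by abel, Fin.sub_val_of_le h]
      omega
    · left
      rw [show i - j = (i - t) - (j - t) by abel, Fin.sub_val_of_le h]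
      omega
  have hcard : #{j : Fin n | (j - i).val < L} = min n L := by
    rw [← Fin.card_filter_val_lt]
    exact card_equiv (Equiv.subRight i) fun t ↦ by simp
  calc _ ≤ #(coveringStarts L i ∪ ({j | (j - i).val < L} : Finset (Fin n))) := card_le_card hsub
    _ ≤ min n L + min n L := (card_union_le _ _).trans_eq (by rw [card_coveringStarts, hcard])
    _ ≤ 2 * L := by omega

end CoveringStarts

section Coverage

variable {Ω : Type*} {n K : ℕ} {T : Fin K → Ω → Fin n}

def uncovered (T : Fin K → Ω → Fin n) (L : ℕ) (i : Fin n) : Set Ω :=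
  {ω | ∀ k, T k ω ∉ coveringStarts L i}

noncomputable def uncoveredCount (T : Fin K → Ω → Fin n) (L : ℕ) (ω : Ω) : ℝ :=
  ∑ i, (uncovered T L i).indicator 1 ω

lemma card_covered_eq (L : ℕ) (ω : Ω) :
    (#{i : Fin n | ∃ k, (i - T k ω).val < L} : ℝ) = n - uncoveredCount T L ω := by
  classical
  have h := card_filter_add_card_filter_not (s := univ) fun i : Fin n ↦ ∃ k, (i - T k ω).val < L
  simp only [card_univ, Fintype.card_fin] at h
  have hcount : uncoveredCount T L ω = #{i : Fin n | ¬∃ k, (i - T k ω).val < L} := by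
    simp [uncoveredCount, Set.indicator_apply, uncovered, coveringStarts]
  rw [hcount, eq_sub_iff_add_eq]
  exact_mod_cast h

variable [MeasurableSpace Ω] {μ : Measure Ω}

lemma measurableSet_uncovered (hmeas : ∀ k, Measurable (T k)) (L : ℕ) (i : Fin n) :
    MeasurableSet (uncovered T L i) := by
  simp only [uncovered, Set.ofPred_forall]
  exact .iInter fun k ↦ hmeas k (.of_discrete (s := {t | t ∉ coveringStarts L i}))

variable [IsProbabilityMeasure μ] [NeZero n] (hmeas : ∀ k, Measurable (T k))
  (hunif : ∀ k t, μ {ω | T k ω = t} = (n : ℝ≥0∞)⁻¹) (hind : iIndepFun T μ)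
include hmeas hunif hind

lemma integral_uncoveredCount {L : ℕ} (hL : L ≤ n) :
    ∫ ω, uncoveredCount T L ω ∂μ = n * (1 - L / n : ℝ) ^ K := by
  simp only [uncoveredCount]
  rw [integral_finsetSum _ fun i _ ↦
    (memLp_indicator_one (measurableSet_uncovered hmeas L i) 1).integrable le_rfl]
  simp_rw [integral_indicator_one (measurableSet_uncovered hmeas L _), uncovered,
    measureReal_forall_notMem hmeas (by simpa using hunif) hind, card_coveringStarts,
    min_eq_right hL]
  simp

lemma variance_uncoveredCount_le (L : ℕ) : Var[uncoveredCount T L; μ] ≤ n * (2 * L) := by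
  classical
  calc Var[uncoveredCount T L; μ]
      ≤ ∑ i : Fin n, (#{j | ¬Disjoint (coveringStarts L i) (coveringStarts L j)} : ℝ) := by
        refine variance_sum_indicator_one_le (measurableSet_uncovered hmeas L) _ fun i j h ↦ ?_
        rw [not_not] at h
        have hinter : uncovered T L i ∩ uncovered T L j =
            {ω | ∀ k, T k ω ∉ coveringStarts L i ∪ coveringStarts L j} := by
          ext; simp [uncovered, forall_and]
        rw [hinter]
        exact measureReal_forall_notMem_union_le hmeas (by simpa using hunif) hind h
    _ ≤ ∑ _i : Fin n, (2 * L : ℝ) :=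
        sum_le_sum fun i _ ↦ by exact_mod_cast card_filter_not_disjoint_coveringStarts_le L i
    _ = n * (2 * L) := by simp

lemma measure_coverage_deviation_le {L : ℕ} (hL : L ≤ n) {δ q : ℝ} (hδ : 0 < δ)
    (hq : |(1 - L / n : ℝ) ^ K - q| ≤ δ / 2) :
    μ {ω | δ < |(#{i : Fin n | ∃ k, (i - T k ω).val < L} : ℝ) / n - (1 - q)|} ≤
      ENNReal.ofReal (8 * L / (n * δ ^ 2)) := by
  set N := uncoveredCount T L
  set p := (1 - L / n : ℝ) ^ K
  have hn : (0 : ℝ) < n := by exact_mod_cast (NeZero.pos n)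
  have hN : MemLp N 2 μ := memLp_finsetSum _ fun i _ ↦
    memLp_indicator_one (measurableSet_uncovered hmeas L i) 2
  have hsub : {ω | δ < |(#{i : Fin n | ∃ k, (i - T k ω).val < L} : ℝ) / n - (1 - q)|} ⊆
      {ω | n * δ / 2 ≤ |N ω - ∫ ω, N ω ∂μ|} := by
    intro ω hω
    simp only [Set.mem_ofPred_eq, card_covered_eq] at hω ⊢
    rw [integral_uncoveredCount hmeas hunif hind hL]
    have hsplit : (n - N ω) / n - (1 - q) = (q - p) - (N ω - n * p) / n := by
      field_simp; ring
    rw [hsplit] at hω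
    have htri := abs_sub (q - p) ((N ω - n * p) / n)
    rw [abs_div, abs_of_pos hn] at htri
    rw [abs_sub_comm] at hq
    have : δ / 2 < |N ω - n * p| / n := by linarith
    rw [lt_div_iff₀ hn] at this
    linarith
  calc _ ≤ μ {ω | n * δ / 2 ≤ |N ω - ∫ ω, N ω ∂μ|} := measure_mono hsub
    _ ≤ ENNReal.ofReal (Var[N; μ] / (n * δ / 2) ^ 2) :=
      meas_ge_le_variance_div_sq hN (by positivity)
    _ ≤ ENNReal.ofReal (8 * L / (n * δ ^ 2)) := by
      refine ENNReal.ofReal_le_ofReal ?_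
      calc Var[N; μ] / (n * δ / 2) ^ 2 ≤ n * (2 * L) / (n * δ / 2) ^ 2 := by
            gcongr; exact variance_uncoveredCount_le hmeas hunif hind L
        _ = 8 * L / (n * δ ^ 2) := by field_simp; ring

end Coverage

lemma tendsto_one_sub_pow_exp_of_tendsto {β : Type*} {l : Filter β} {a : β → ℝ} {K : β → ℕ}
    {c : ℝ} (ha : Tendsto a l (𝓝 0)) (hKa : Tendsto (fun x ↦ K x * a x) l (𝓝 c)) :
    Tendsto (fun x ↦ (1 - a x) ^ K x) l (𝓝 (exp (-c))) := by
  have hlower : Tendsto (fun x ↦ exp (-(K x * a x / (1 - a x)))) l (𝓝 (exp (-c))) := by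
    have h := hKa.div (tendsto_const_nhds.sub ha) (by norm_num : (1 : ℝ) - 0 ≠ 0)
    rw [sub_zero, div_one] at h
    exact (continuous_exp.tendsto _).comp h.neg
  have hupper : Tendsto (fun x ↦ exp (-(K x * a x))) l (𝓝 (exp (-c))) :=
    (continuous_exp.tendsto _).comp hKa.neg
  refine tendsto_of_tendsto_of_tendsto_of_le_of_le' hlower hupper ?_ ?_
  · filter_upwards [ha.eventually_lt_const one_pos] with x hx
    have hpos : 0 < 1 - a x := by linarith
    have hbase : exp (-(a x / (1 - a x))) ≤ 1 - a x := by
      have h := add_one_le_exp (a x / (1 - a x))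
      rw [show a x / (1 - a x) + 1 = (1 - a x)⁻¹ by field_simp; ring] at h
      rw [exp_neg]
      exact (inv_anti₀ (by positivity) h).trans_eq (inv_inv _)
    rw [mul_div_assoc, neg_mul_eq_mul_neg, exp_nat_mul]
    exact pow_le_pow_left₀ (exp_nonneg _) hbase _
  · filter_upwards [ha.eventually_lt_const one_pos] with x hx
    rw [neg_mul_eq_mul_neg, exp_nat_mul]
    exact pow_le_pow_left₀ (by linarith) (one_sub_le_exp_neg _) _

lemma tendsto_natFloor_div_of_tendsto_div {ℓ : ℕ → ℝ} (hℓ : ∀ᶠ n in atTop, 0 ≤ ℓ n)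
    (hℓn : Tendsto (fun n ↦ ℓ n / n) atTop (𝓝 0)) :
    Tendsto (fun n : ℕ ↦ (⌊ℓ n⌋₊ : ℝ) / n) atTop (𝓝 0) := by
  refine tendsto_of_tendsto_of_tendsto_of_le_of_le' tendsto_const_nhds hℓn
    (.of_forall fun n ↦ by positivity) ?_
  filter_upwards [hℓ] with n hn
  exact div_le_div_of_nonneg_right (Nat.floor_le hn) n.cast_nonneg

lemma tendsto_one_sub_floor_div_pow_floor {ℓ : ℕ → ℝ} {c : ℝ} (hc : 0 < c)
    (hℓ : Tendsto ℓ atTop atTop) (hℓn : Tendsto (fun n ↦ ℓ n / n) atTop (𝓝 0)) :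
    Tendsto (fun n : ℕ ↦ (1 - ⌊ℓ n⌋₊ / n : ℝ) ^ ⌊c * n / ℓ n⌋₊) atTop (𝓝 (exp (-c))) := by
  have hℓpos : ∀ᶠ n in atTop, 0 < ℓ n := hℓ.eventually_gt_atTop 0
  have hreads : Tendsto (fun n : ℕ ↦ c * n / ℓ n) atTop atTop := by
    have h : Tendsto (fun n : ℕ ↦ ℓ n / n) atTop (𝓝[>] 0) := by
      refine tendsto_nhdsWithin_iff.mpr ⟨hℓn, ?_⟩
      filter_upwards [hℓpos, eventually_gt_atTop 0] with n hn hn0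
      exact div_pos hn (by exact_mod_cast hn0)
    refine (h.inv_tendsto_nhdsGT_zero.const_mul_atTop hc).congr fun n ↦ ?_
    simp [mul_div_assoc]
  refine tendsto_one_sub_pow_exp_of_tendsto
    (tendsto_natFloor_div_of_tendsto_div (hℓpos.mono fun _ ↦ le_of_lt) hℓn) ?_
  have h := ((tendsto_nat_floor_div_atTop.comp hreads).mul
    (tendsto_nat_floor_div_atTop.comp hℓ)).const_mul c
  rw [mul_one, mul_one] at h
  refine h.congr' ?_
  filter_upwards [hℓpos, eventually_gt_atTop 0] with n hn hn0
  have : (n : ℝ) ≠ 0 := by exact_mod_cast hn0.ne'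
  simp only [Function.comp_apply]
  field_simp

lemma tendsto_mul_logb_atTop {Lb : ℝ} (hLb : 0 < Lb) :
    Tendsto (fun n : ℕ ↦ Lb * logb 2 n) atTop atTop :=
  ((tendsto_logb_atTop one_lt_two).comp tendsto_natCast_atTop_atTop).const_mul_atTop hLb

lemma tendsto_mul_logb_div_atTop (Lb : ℝ) :
    Tendsto (fun n : ℕ ↦ Lb * logb 2 n / n) atTop (𝓝 0) := by
  have h := (isLittleO_log_id_atTop.tendsto_div_nhds_zero.comp
    tendsto_natCast_atTop_atTop).const_mul (Lb / log 2)
  rw [mul_zero] at h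
  refine h.congr fun n ↦ ?_
  simp only [Function.comp_apply, id, logb]
  ring

theorem stmt12 (c Lb : ℝ) (hc : 0 < c) (hL : 1 < Lb) (ε : ℝ) (hε : 0 < ε)
    (Ω : ℕ → Type) (mΩ : ∀ n, MeasurableSpace (Ω n))
    (μ : ∀ n, Measure (Ω n)) (hprob : ∀ n, IsProbabilityMeasure (μ n))
    (T : ∀ n : ℕ, Fin (⌊c * n / (Lb * Real.logb 2 n)⌋₊) → Ω n → Fin n)
    (hmeas : ∀ n k, Measurable (T n k))
    (hunif : ∀ n, 0 < n → ∀ k (t : Fin n), μ n {ω | T n k ω = t} = (n : ENNReal)⁻¹)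
    (hind : ∀ n, iIndepFun (T n) (μ n)) :
    Tendsto (fun n : ℕ =>
      μ n {ω | ε * (1 - Real.exp (-c)) <
        |((Finset.univ.filter (fun i : Fin n =>
            ∃ k, (i - T n k ω : Fin n).val < ⌊Lb * Real.logb 2 n⌋₊)).card : ℝ) / n -
          (1 - Real.exp (-c))|})
      atTop (nhds 0) := by
  have hℓ := tendsto_mul_logb_atTop (zero_lt_one.trans hL)
  have hℓn := tendsto_mul_logb_div_atTop Lb
  have hLn := tendsto_natFloor_div_of_tendsto_div (hℓ.eventually_ge_atTop 0) hℓn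
  have hp := Metric.tendsto_nhds.mp (tendsto_one_sub_floor_div_pow_floor hc hℓ hℓn)
  have hδ : 0 < ε * (1 - exp (-c)) := mul_pos hε (by simpa using hc)
  have hlim : Tendsto (fun n : ℕ ↦
      ENNReal.ofReal (8 * ⌊Lb * logb 2 n⌋₊ / (n * (ε * (1 - exp (-c))) ^ 2))) atTop (𝓝 0) := by
    rw [← ENNReal.ofReal_zero]
    refine ENNReal.tendsto_ofReal ?_
    have h := (hLn.const_mul 8).div_const ((ε * (1 - exp (-c))) ^ 2)
    rw [mul_zero, zero_div] at h
    refine h.congr fun n ↦ ?_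
    field_simp
  refine tendsto_of_tendsto_of_tendsto_of_le_of_le' tendsto_const_nhds hlim
    (.of_forall fun _ ↦ zero_le) ?_
  filter_upwards [eventually_gt_atTop 0, hLn.eventually_lt_const one_pos,
    hp _ (half_pos hδ)] with n hn hLn_lt hpn
  have : NeZero n := ⟨hn.ne'⟩
  rw [div_lt_one (by exact_mod_cast hn), Nat.cast_lt] at hLn_lt
  rw [Real.dist_eq] at hpn
  exact measure_coverage_deviation_le (hmeas n) (hunif n hn) (hind n)
    hLn_lt.le hδ hpn.le
end

section
/- Fix c > 0 and L̄ > 1, L = L̄·log₂ n, K = c·n/L. Let K′ be the number of islands (equivalently, the number of reads whose successor read starts more than L positions later on the circle) formed by K reads of length L with independent uniform starting positions on a circular length-n string. Then for every ε > 0, P(|K′ − K·e^{−c}| ≥ ε·K·e^{−c}) → 0 as n → ∞. -/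
open MeasureTheory ProbabilityTheory Real Filter

/-!
Read `k` ends an island iff no other read starts in the arc `arc (T k) L` of the `L` positions
starting at `T k`. Conditioning on the start of read `k`, independence and uniformity give
`P(island k) = p = (1 - L/n)^(K-1)`. Two islands `j ≠ k` force the starts of `j` and `k` to be
at circular distance `≥ L` both ways (`n (n - 2L + 1)` ordered pairs), and then the two arcs are
disjoint, so `P(islands j and k) = q = (1 - (2L-1)/n) (1 - 2L/n)^(K-2)`. Hence
`Var K' = K p + K (K-1) q - K² p²`, and since `K L / n → c` we have `p → e^{-c}` and
`q → e^{-2c}`, so `Var K' = o(K²)`. Chebyshev bounds `P(|K' - K p| ≥ ε K e^{-c} / 2)` by a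
quantity tending to `0`, and eventually `|K p - K e^{-c}| < ε K e^{-c} / 2`.
-/

open Finset Topology

namespace ReadIslands

section Arcs

variable {n : ℕ} [NeZero n]

def arc (t : Fin n) (L : ℕ) : Finset (Fin n) := {x | (x - t).val < L}

lemma card_filter_sub_right (t : Fin n) (P : Fin n → Prop) [DecidablePred P] :
    #{x | P (x - t)} = #{x | P x} :=
  card_nbij' (· - t) (· + t) (fun x hx => by simpa using hx) (fun x hx => by simpa using hx)
    (fun x _ => by simp) (fun x _ => by simp)

lemma card_arc {L : ℕ} (hL : L ≤ n) (t : Fin n) : #(arc t L) = L := by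
  rw [arc, card_filter_sub_right t (fun d => d.val < L), Fin.card_filter_val_lt]
  exact min_eq_right hL

lemma card_compl_arc {L : ℕ} (hL : L ≤ n) (t : Fin n) : #(arc t L)ᶜ = n - L := by
  rw [card_compl, Fintype.card_fin, card_arc hL]

lemma disjoint_arc {L : ℕ} {s t : Fin n} (hs : s ∉ arc t L) (ht : t ∉ arc s L) :
    Disjoint (arc s L) (arc t L) := by
  simp only [arc, mem_filter, mem_univ, true_and, not_lt] at hs ht
  refine disjoint_left.2 fun x hxs hxt => ?_
  simp only [arc, mem_filter, mem_univ, true_and] at hxs hxt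
  rcases le_total (x - t).val (x - s).val with h | h
  · have : t - s = (x - s) - (x - t) := by abel
    rw [this, Fin.sub_val_of_le h] at ht
    omega
  · have : s - t = (x - t) - (x - s) := by abel
    rw [this, Fin.sub_val_of_le h] at hs
    omega

lemma card_compl_arc_union {L : ℕ} (h2L : 2 * L ≤ n) {s t : Fin n} (hs : s ∉ arc t L)
    (ht : t ∉ arc s L) : #(arc s L ∪ arc t L)ᶜ = n - 2 * L := by
  rw [card_compl, Fintype.card_fin, card_union_of_disjoint (disjoint_arc hs ht),
    card_arc (by omega), card_arc (by omega), two_mul]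

lemma card_far_from {L : ℕ} (hL : 0 < L) (h2L : 2 * L ≤ n) (s : Fin n) :
    #{t | s ∉ arc t L ∧ t ∉ arc s L} = n - 2 * L + 1 := by
  have hneg : ∀ t : Fin n, s - t = -(t - s) := fun t => by abel
  simp only [arc, mem_filter, mem_univ, true_and, not_lt, hneg]
  rw [card_filter_sub_right s (fun d => L ≤ (-d).val ∧ L ≤ d.val)]
  have : (univ.filter fun d : Fin n => L ≤ (-d).val ∧ L ≤ d.val) =
      Icc ⟨L, by omega⟩ ⟨n - L, by omega⟩ := by
    ext d
    simp only [mem_filter, mem_univ, true_and, mem_Icc, Fin.le_def, Fin.val_neg']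
    rcases Nat.eq_zero_or_pos d.val with h0 | hpos
    · simp only [h0, Nat.sub_zero, Nat.mod_self]
      omega
    · rw [Nat.mod_eq_of_lt (by omega)]
      omega
  rw [this, Fin.card_Icc]
  dsimp only
  omega

lemma card_far_pairs {L : ℕ} (hL : 0 < L) (h2L : 2 * L ≤ n) :
    #{p : Fin n × Fin n | p.1 ∉ arc p.2 L ∧ p.2 ∉ arc p.1 L} = n * (n - 2 * L + 1) := by
  rw [card_filter, Fintype.sum_prod_type]
  simp_rw [← card_filter, card_far_from hL h2L]
  simp

end Arcs

section UniformPositions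

variable {Ω ι α : Type*} {T : ι → Ω → α}

def cylinder (T : ι → Ω → α) (S : Finset ι) (x : ι → α) (C : Finset α) : Set Ω :=
  {ω | (∀ m ∈ S, T m ω = x m) ∧ ∀ m ∉ S, T m ω ∈ C}

variable [MeasurableSpace Ω] {μ : Measure Ω} [MeasurableSpace α] [MeasurableSingletonClass α]

lemma measureReal_preimage_finset [IsFiniteMeasure μ] [Fintype α]
    (hmeas : ∀ k, Measurable (T k))
    (hunif : ∀ k t, μ {ω | T k ω = t} = (Fintype.card α : ENNReal)⁻¹) (k : ι) (B : Finset α) :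
    μ.real (T k ⁻¹' B) = #B / Fintype.card α := by
  have : T k ⁻¹' B = ⋃ t ∈ B, T k ⁻¹' {t} := by ext; simp
  rw [this, measureReal_biUnion_finset ?_ fun t _ => hmeas k (measurableSet_singleton t)]
  · simp [measureReal_def, Set.preimage, hunif, div_eq_mul_inv]
  · intro s _ t _ hst
    exact Set.disjoint_left.2 fun ω (hs : T k ω = s) (ht : T k ω = t) => hst (hs ▸ ht)

lemma measureReal_iInter_preimage [IsFiniteMeasure μ] [Fintype α] [Fintype ι]
    (hmeas : ∀ k, Measurable (T k))
    (hunif : ∀ k t, μ {ω | T k ω = t} = (Fintype.card α : ENNReal)⁻¹) (hind : iIndepFun T μ)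
    (B : ι → Finset α) :
    μ.real (⋂ k, T k ⁻¹' B k) = ∏ k, (#(B k) : ℝ) / Fintype.card α := by
  rw [measureReal_def, hind.meas_iInter fun k => ⟨B k, (B k).measurableSet, rfl⟩,
    ENNReal.toReal_prod]
  exact prod_congr rfl fun k _ => measureReal_preimage_finset hmeas hunif k (B k)

lemma measureReal_cylinder [IsFiniteMeasure μ] [Fintype α] [Fintype ι] [DecidableEq ι]
    (hmeas : ∀ k, Measurable (T k))
    (hunif : ∀ k t, μ {ω | T k ω = t} = (Fintype.card α : ENNReal)⁻¹) (hind : iIndepFun T μ)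
    (S : Finset ι) (x : ι → α) (C : Finset α) :
    μ.real (cylinder T S x C) =
      (Fintype.card α : ℝ)⁻¹ ^ #S * (#C / Fintype.card α) ^ (Fintype.card ι - #S) := by
  have hset : cylinder T S x C =
      ⋂ m, T m ⁻¹' ((if m ∈ S then {x m} else C : Finset α) : Set α) := by
    ext ω
    simp only [cylinder, Set.mem_iInter, Set.mem_preimage]
    refine ⟨fun ⟨hS, hC⟩ m => ?_, fun h => ⟨fun m hm => ?_, fun m hm => ?_⟩⟩
    · split_ifs with hm
      · simpa using hS m hm
      · exact hC m hm
    · simpa [hm] using h m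
    · simpa [hm] using h m
  rw [hset, measureReal_iInter_preimage hmeas hunif hind, ← prod_mul_prod_compl S]
  congr 1
  · exact prod_eq_pow_card fun m hm => by simp [hm]
  · rw [prod_eq_pow_card (b := (#C : ℝ) / Fintype.card α) fun m hm => by
      simp [mem_compl.1 hm], card_compl]

lemma measurableSet_preimage_pi [Finite ι] [Finite α] (hmeas : ∀ k, Measurable (T k))
    (s : Set (ι → α)) : MeasurableSet ((fun ω k => T k ω) ⁻¹' s) :=
  s.toFinite.measurableSet.preimage (measurable_pi_lambda _ hmeas)

lemma measurableSet_cylinder [Finite ι] [Finite α] (hmeas : ∀ k, Measurable (T k))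
    (S : Finset ι) (x : ι → α) (C : Finset α) : MeasurableSet (cylinder T S x C) :=
  measurableSet_preimage_pi hmeas {y | (∀ m ∈ S, y m = x m) ∧ ∀ m ∉ S, y m ∈ C}

end UniformPositions

section IslandEvents

variable {Ω ι : Type*} {n L : ℕ} {T : ι → Ω → Fin n}

def islandEvent (T : ι → Ω → Fin n) (L : ℕ) (k : ι) : Set Ω :=
  {ω | ∀ k' ≠ k, T k' ω ∉ arc (T k ω) L}

noncomputable def islandProb (n L K : ℕ) : ℝ := (1 - L / n) ^ (K - 1)

noncomputable def islandPairProb (n L K : ℕ) : ℝ :=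
  (1 - (2 * L - 1) / n) * (1 - 2 * L / n) ^ (K - 2)

lemma islandEvent_eq_iUnion_cylinder [DecidableEq ι] (k : ι) :
    islandEvent T L k = ⋃ t, cylinder T {k} (fun _ => t) (arc t L)ᶜ := by
  ext ω
  simp [islandEvent, cylinder]

lemma inter_islandEvent_eq_biUnion_cylinder [DecidableEq ι] {j k : ι} (hjk : j ≠ k) :
    islandEvent T L j ∩ islandEvent T L k =
      ⋃ p ∈ ({p | p.1 ∉ arc p.2 L ∧ p.2 ∉ arc p.1 L} : Finset (Fin n × Fin n)),
        cylinder T {j, k} (fun m => if m = j then p.1 else p.2) (arc p.1 L ∪ arc p.2 L)ᶜ := by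
  ext ω
  simp only [islandEvent, cylinder, Set.mem_inter_iff, Set.mem_iUnion, mem_filter, mem_univ,
    true_and, exists_prop, mem_insert, mem_singleton, forall_eq_or_imp, forall_eq, if_pos,
    if_neg hjk.symm, not_or, mem_compl, mem_union]
  constructor
  · rintro ⟨h1, h2⟩
    exact ⟨(T j ω, T k ω), ⟨h2 j hjk, h1 k hjk.symm⟩, ⟨rfl, rfl⟩,
      fun m ⟨hj, hk⟩ => ⟨h1 m hj, h2 m hk⟩⟩
  · rintro ⟨⟨s, t⟩, ⟨hst, hts⟩, ⟨hs, ht⟩, h⟩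
    refine ⟨fun m hj => ?_, fun m hk => ?_⟩
    · by_cases hk : m = k
      · rw [hk, hs, ht]; exact hts
      · rw [hs]; exact (h m ⟨hj, hk⟩).1
    · by_cases hj : m = j
      · rw [hj, hs, ht]; exact hst
      · rw [ht]; exact (h m ⟨hj, hk⟩).2

variable [MeasurableSpace Ω] {μ : Measure Ω}

lemma measurableSet_islandEvent [Finite ι] (hmeas : ∀ k, Measurable (T k)) (k : ι) :
    MeasurableSet (islandEvent T L k) :=
  measurableSet_preimage_pi hmeas {x | ∀ k' ≠ k, x k' ∉ arc (x k) L}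

variable [IsFiniteMeasure μ] [Fintype ι] [DecidableEq ι] [NeZero n]

lemma measureReal_islandEvent (hmeas : ∀ k, Measurable (T k))
    (hunif : ∀ k t, μ {ω | T k ω = t} = (n : ENNReal)⁻¹) (hind : iIndepFun T μ) (hL : L ≤ n)
    (k : ι) : μ.real (islandEvent T L k) = islandProb n L (Fintype.card ι) := by
  have hunif' : ∀ k t, μ {ω | T k ω = t} = (Fintype.card (Fin n) : ENNReal)⁻¹ := by
    simpa using hunif
  rw [islandEvent_eq_iUnion_cylinder,
    measureReal_iUnion_fintype ?_ fun t => measurableSet_cylinder hmeas _ _ _]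
  · simp_rw [measureReal_cylinder hmeas hunif' hind, card_compl_arc hL, card_singleton]
    have : (n : ℝ) ≠ 0 := NeZero.ne _
    simp only [Fintype.card_fin, pow_one, Nat.cast_sub hL, sum_const, card_univ, nsmul_eq_mul,
      islandProb]
    field_simp
  · intro s t hst
    exact Set.disjoint_left.2 fun ω hs ht => hst ((hs.1 k (mem_singleton_self k)).symm.trans
      (ht.1 k (mem_singleton_self k)))

lemma measureReal_inter_islandEvent (hmeas : ∀ k, Measurable (T k))
    (hunif : ∀ k t, μ {ω | T k ω = t} = (n : ENNReal)⁻¹) (hind : iIndepFun T μ) (hL : 0 < L)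
    (h2L : 2 * L ≤ n) {j k : ι} (hjk : j ≠ k) :
    μ.real (islandEvent T L j ∩ islandEvent T L k) = islandPairProb n L (Fintype.card ι) := by
  have hunif' : ∀ k t, μ {ω | T k ω = t} = (Fintype.card (Fin n) : ENNReal)⁻¹ := by
    simpa using hunif
  rw [inter_islandEvent_eq_biUnion_cylinder hjk,
    measureReal_biUnion_finset ?_ fun p _ => measurableSet_cylinder hmeas _ _ _]
  · rw [sum_congr rfl fun p hp => by
      rw [measureReal_cylinder hmeas hunif' hind, card_pair hjk,
        card_compl_arc_union h2L (mem_filter.1 hp).2.1 (mem_filter.1 hp).2.2, Fintype.card_fin],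
      sum_const, card_far_pairs hL h2L, nsmul_eq_mul]
    have : (n : ℝ) ≠ 0 := NeZero.ne _
    push_cast [islandPairProb, Nat.cast_sub h2L]
    field_simp
    ring
  · intro p _ q _ hpq
    exact Set.disjoint_left.2 fun ω hp hq => hpq <| Prod.ext
      (by simpa using (hp.1 j (by simp)).symm.trans (hq.1 j (by simp)))
      (by simpa [hjk.symm] using (hp.1 k (by simp)).symm.trans (hq.1 k (by simp)))

end IslandEvents

section SecondMoment

variable {Ω ι : Type*} [Fintype ι] {A : ι → Set Ω}

lemma sum_indicator_one_sq (ω : Ω) :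
    (∑ i, (A i).indicator (1 : Ω → ℝ) ω) ^ 2 = ∑ ij : ι × ι, (A ij.1 ∩ A ij.2).indicator 1 ω := by
  simp [sq, sum_mul_sum, Fintype.sum_prod_type, Set.inter_indicator_one]

variable [MeasurableSpace Ω] {μ : Measure Ω}

lemma integral_sum_indicator_one [IsFiniteMeasure μ] (hA : ∀ i, MeasurableSet (A i)) :
    ∫ ω, ∑ i, (A i).indicator 1 ω ∂μ = ∑ i, μ.real (A i) := by
  rw [integral_finsetSum _ fun i _ => (integrable_const 1).indicator (hA i)]
  exact sum_congr rfl fun i _ => integral_indicator_one (hA i)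

lemma sum_sum_measureReal_inter [DecidableEq ι] {p q : ℝ} (hp : ∀ i, μ.real (A i) = p)
    (hq : Pairwise fun i j => μ.real (A i ∩ A j) = q) :
    ∑ i, ∑ j, μ.real (A i ∩ A j) =
      Fintype.card ι * p + Fintype.card ι * (Fintype.card ι - 1) * q := by
  have hrow : ∀ i, ∑ j, μ.real (A i ∩ A j) = p + (Fintype.card ι - 1) * q := fun i => by
    rw [← add_sum_erase _ _ (mem_univ i), Set.inter_self, hp,
      sum_congr rfl fun j hj => hq (ne_of_mem_erase hj).symm, sum_const, card_erase_of_mem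
        (mem_univ i), card_univ, nsmul_eq_mul, Nat.cast_pred (Fintype.card_pos_iff.2 ⟨i⟩)]
  simp only [hrow, sum_const, card_univ, nsmul_eq_mul]
  ring

theorem meas_ge_le_of_measureReal_inter [IsProbabilityMeasure μ] [DecidableEq ι]
    (hA : ∀ i, MeasurableSet (A i)) {p q : ℝ} (hp : ∀ i, μ.real (A i) = p)
    (hq : Pairwise fun i j => μ.real (A i ∩ A j) = q) {a : ℝ} (ha : 0 < a) :
    μ {ω | a ≤ |∑ i, (A i).indicator 1 ω - Fintype.card ι * p|} ≤
      ENNReal.ofReal ((Fintype.card ι * p + Fintype.card ι * (Fintype.card ι - 1) * q -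
        (Fintype.card ι * p) ^ 2) / a ^ 2) := by
  set X : Ω → ℝ := fun ω => ∑ i, (A i).indicator 1 ω
  have hX : MemLp X 2 μ :=
    memLp_finsetSum _ fun i _ => (memLp_const 1).indicator (hA i)
  have hmean : μ[X] = Fintype.card ι * p := by
    simp [X, integral_sum_indicator_one hA, hp]
  have hsecond : μ[X ^ 2] = Fintype.card ι * p + Fintype.card ι * (Fintype.card ι - 1) * q := by
    simp only [Pi.pow_apply, X, sum_indicator_one_sq]
    rw [integral_sum_indicator_one (A := fun ij : ι × ι => A ij.1 ∩ A ij.2)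
      fun ij => (hA ij.1).inter (hA ij.2), Fintype.sum_prod_type,
      sum_sum_measureReal_inter hp hq]
  have := meas_ge_le_variance_div_sq hX ha
  rwa [variance_eq_sub hX, hmean, hsecond] at this

end SecondMoment

lemma le_abs_sub_mul_of_abs_sub_lt {S K p e ε : ℝ} (hK : 0 < K) (hpe : |p - e| < ε / 2 * e)
    (h : ε * K * e ≤ |S - K * e|) : ε / 2 * K * e ≤ |S - K * p| := by
  have htri := abs_sub_le S (K * p) (K * e)
  rw [← mul_sub, abs_mul, abs_of_pos hK] at htri
  nlinarith [mul_lt_mul_of_pos_left hpe hK]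

section IslandCount

variable {Ω ι : Type*} [Fintype ι] {n L : ℕ} {T : ι → Ω → Fin n}

-- The decidability instance is a parameter: for `ι = Fin K` the filter is elaborated with
-- `Nat.decidableForallFin`, not with the instance derived from `[Fintype ι] [DecidableEq ι]`.
lemma card_islands_eq_sum_indicator (ω : Ω)
    [DecidablePred fun k => ∀ k', k' ≠ k → ¬ (T k' ω - T k ω : Fin n).val < L] :
    ((univ.filter fun k => ∀ k', k' ≠ k → ¬ (T k' ω - T k ω : Fin n).val < L).card : ℝ) =
      ∑ k, (islandEvent T L k).indicator 1 ω := by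
  rw [card_filter]
  push_cast
  refine sum_congr rfl fun k _ => ?_
  by_cases h : ∀ k', k' ≠ k → ¬ (T k' ω - T k ω : Fin n).val < L
  · rw [if_pos h, Set.indicator_of_mem (by simpa [islandEvent, arc] using h), Pi.one_apply]
  · rw [if_neg h, Set.indicator_of_notMem (by simpa [islandEvent, arc] using h)]

variable [MeasurableSpace Ω] {μ : Measure Ω} [IsProbabilityMeasure μ] [DecidableEq ι] [NeZero n]
  [∀ ω, DecidablePred fun k => ∀ k', k' ≠ k → ¬ (T k' ω - T k ω : Fin n).val < L]

theorem meas_ge_le_card_islands (hmeas : ∀ k, Measurable (T k))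
    (hunif : ∀ k t, μ {ω | T k ω = t} = (n : ENNReal)⁻¹) (hind : iIndepFun T μ) (hL : 0 < L)
    (h2L : 2 * L ≤ n) {a : ℝ} (ha : 0 < a) :
    μ {ω | a ≤ |((univ.filter fun k => ∀ k', k' ≠ k → ¬ (T k' ω - T k ω : Fin n).val < L).card
        : ℝ) - Fintype.card ι * islandProb n L (Fintype.card ι)|} ≤
      ENNReal.ofReal ((Fintype.card ι * islandProb n L (Fintype.card ι) +
        Fintype.card ι * (Fintype.card ι - 1) * islandPairProb n L (Fintype.card ι) -
        (Fintype.card ι * islandProb n L (Fintype.card ι)) ^ 2) / a ^ 2) := by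
  simp_rw [card_islands_eq_sum_indicator]
  exact meas_ge_le_of_measureReal_inter (measurableSet_islandEvent hmeas)
    (measureReal_islandEvent hmeas hunif hind (by omega))
    (fun j k hjk => measureReal_inter_islandEvent hmeas hunif hind hL h2L hjk) ha

theorem meas_ge_le_card_islands_of_abs_sub_lt [Nonempty ι] (hmeas : ∀ k, Measurable (T k))
    (hunif : ∀ k t, μ {ω | T k ω = t} = (n : ENNReal)⁻¹) (hind : iIndepFun T μ) (hL : 0 < L)
    (h2L : 2 * L ≤ n) {e ε : ℝ} (he : 0 < e) (hε : 0 < ε)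
    (hpe : |islandProb n L (Fintype.card ι) - e| < ε / 2 * e) :
    μ {ω | ε * Fintype.card ι * e ≤
        |((univ.filter fun k => ∀ k', k' ≠ k → ¬ (T k' ω - T k ω : Fin n).val < L).card : ℝ) -
          Fintype.card ι * e|} ≤
      ENNReal.ofReal ((islandProb n L (Fintype.card ι) / Fintype.card ι +
        (1 - 1 / Fintype.card ι) * islandPairProb n L (Fintype.card ι) -
        islandProb n L (Fintype.card ι) ^ 2) / (ε / 2 * e) ^ 2) := by
  have hK : (0 : ℝ) < Fintype.card ι := Nat.cast_pos.2 Fintype.card_pos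
  calc _ ≤ μ {ω | ε / 2 * Fintype.card ι * e ≤
        |((univ.filter fun k => ∀ k', k' ≠ k → ¬ (T k' ω - T k ω : Fin n).val < L).card : ℝ) -
          Fintype.card ι * islandProb n L (Fintype.card ι)|} :=
        measure_mono fun ω hω => le_abs_sub_mul_of_abs_sub_lt hK hpe hω
    _ ≤ _ := meas_ge_le_card_islands hmeas hunif hind hL h2L (by positivity)
    _ = _ := by
        congr 1
        field_simp

end IslandCount

section Asymptotics

theorem tendsto_one_add_pow_of_tendsto_mul {α : Type*} {l : Filter α} {g : α → ℝ} {m : α → ℕ}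
    {a : ℝ} (hg : Tendsto g l (𝓝 0)) (hmg : Tendsto (fun i => m i * g i) l (𝓝 a)) :
    Tendsto (fun i => (1 + g i) ^ m i) l (𝓝 (exp a)) := by
  have hpos : ∀ᶠ i in l, 0 < 1 + g i := by
    filter_upwards [hg.eventually (eventually_gt_nhds (by norm_num : (-1 : ℝ) < 0))] with i hi
    linarith
  have hlow : Tendsto (fun i => exp (m i * (1 - (1 + g i)⁻¹))) l (𝓝 (exp a)) := by
    have h := hmg.div (tendsto_const_nhds.add hg) (by norm_num : (1 : ℝ) + 0 ≠ 0)
    rw [add_zero, div_one] at h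
    refine (continuous_exp.tendsto a).comp (h.congr' ?_)
    filter_upwards [hpos] with i hi
    simp only [Pi.div_apply]
    field_simp
    ring
  refine tendsto_of_tendsto_of_tendsto_of_le_of_le' hlow ((continuous_exp.tendsto a).comp hmg)
    ?_ ?_
  · filter_upwards [hpos] with i hi
    calc exp (m i * (1 - (1 + g i)⁻¹)) ≤ exp (m i * log (1 + g i)) :=
          exp_le_exp.2 (mul_le_mul_of_nonneg_left (one_sub_inv_le_log_of_pos hi) (by positivity))
      _ = (1 + g i) ^ m i := by rw [← log_pow, exp_log (pow_pos hi _)]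
  · filter_upwards [hpos] with i hi
    calc (1 + g i) ^ m i ≤ exp (g i) ^ m i :=
          pow_le_pow_left₀ hi.le (by linarith [add_one_le_exp (g i)]) _
      _ = exp (m i * g i) := (exp_nat_mul _ _).symm

variable {K L : ℕ → ℕ} {c : ℝ}

lemma tendsto_one_sub_mul_div_pow (hL : Tendsto (fun n => (L n : ℝ) / n) atTop (𝓝 0))
    (hK : Tendsto K atTop atTop) (hKL : Tendsto (fun n => (K n : ℝ) * L n / n) atTop (𝓝 c))
    (b : ℝ) (j : ℕ) :
    Tendsto (fun n => (1 - b * L n / n) ^ (K n - j)) atTop (𝓝 (exp (-(b * c)))) := by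
  have hg : Tendsto (fun n => -(b * L n / n)) atTop (𝓝 0) := by
    simpa [mul_div_assoc] using (hL.const_mul b).neg
  have hmg : Tendsto (fun n => ((K n - j : ℕ) : ℝ) * -(b * L n / n)) atTop (𝓝 (-(b * c))) := by
    have h := ((hKL.sub (hL.const_mul (j : ℝ))).const_mul b).neg
    rw [mul_zero, sub_zero] at h
    refine h.congr' ?_
    filter_upwards [hK.eventually_ge_atTop j] with n hn
    rw [Nat.cast_sub hn]
    ring
  simpa [sub_eq_add_neg] using tendsto_one_add_pow_of_tendsto_mul hg hmg

lemma eventually_pos_of_tendsto_mul_div (hc : 0 < c)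
    (hKL : Tendsto (fun n => (K n : ℝ) * L n / n) atTop (𝓝 c)) : ∀ᶠ n in atTop, 0 < L n := by
  filter_upwards [hKL.eventually (eventually_gt_nhds hc)] with n hn
  refine Nat.pos_of_ne_zero fun h => ?_
  simp [h] at hn

lemma eventually_two_mul_le_of_tendsto_div (hL : Tendsto (fun n => (L n : ℝ) / n) atTop (𝓝 0)) :
    ∀ᶠ n in atTop, 2 * L n ≤ n := by
  filter_upwards [hL.eventually (eventually_lt_nhds (by norm_num : (0 : ℝ) < 1 / 2)),
    eventually_gt_atTop 0] with n hn hn0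
  rw [div_lt_iff₀ (by exact_mod_cast hn0)] at hn
  exact_mod_cast (by linarith : (2 * L n : ℝ) ≤ n)

lemma tendsto_islandProb (hL : Tendsto (fun n => (L n : ℝ) / n) atTop (𝓝 0))
    (hK : Tendsto K atTop atTop) (hKL : Tendsto (fun n => (K n : ℝ) * L n / n) atTop (𝓝 c)) :
    Tendsto (fun n => islandProb n (L n) (K n)) atTop (𝓝 (exp (-c))) := by
  simpa [islandProb] using tendsto_one_sub_mul_div_pow hL hK hKL 1 1

lemma tendsto_islandPairProb (hL : Tendsto (fun n => (L n : ℝ) / n) atTop (𝓝 0))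
    (hK : Tendsto K atTop atTop) (hKL : Tendsto (fun n => (K n : ℝ) * L n / n) atTop (𝓝 c)) :
    Tendsto (fun n => islandPairProb n (L n) (K n)) atTop (𝓝 (exp (-c) ^ 2)) := by
  have h1 : Tendsto (fun n => (1 : ℝ) - (2 * L n - 1) / n) atTop (𝓝 1) := by
    have h := tendsto_const_nhds (x := (1 : ℝ)).sub ((hL.const_mul 2).sub
      tendsto_one_div_atTop_nhds_zero_nat)
    rw [mul_zero, sub_zero, sub_zero] at h
    refine h.congr fun n => ?_
    rw [sub_div, mul_div_assoc]
  rw [← exp_nat_mul, ← one_mul (exp _)]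
  unfold islandPairProb
  convert h1.mul (tendsto_one_sub_mul_div_pow hL hK hKL 2 2) using 4
  push_cast
  ring

variable {ℓ : ℕ → ℝ}

lemma tendsto_natFloor_div_natCast (hℓ : Tendsto ℓ atTop atTop)
    (hℓn : Tendsto (fun n => ℓ n / n) atTop (𝓝 0)) :
    Tendsto (fun n => (⌊ℓ n⌋₊ : ℝ) / n) atTop (𝓝 0) := by
  refine tendsto_of_tendsto_of_tendsto_of_le_of_le' tendsto_const_nhds hℓn
    (Eventually.of_forall fun n => by positivity) ?_
  filter_upwards [hℓ.eventually_ge_atTop 0] with n hn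
  exact div_le_div_of_nonneg_right (Nat.floor_le hn) n.cast_nonneg

lemma tendsto_mul_natCast_div_atTop (hc : 0 < c) (hℓ : Tendsto ℓ atTop atTop)
    (hℓn : Tendsto (fun n => ℓ n / n) atTop (𝓝 0)) :
    Tendsto (fun n => c * n / ℓ n) atTop atTop := by
  have hpos : Tendsto (fun n => ℓ n / n) atTop (𝓝[>] 0) := by
    refine tendsto_nhdsWithin_iff.2 ⟨hℓn, ?_⟩
    filter_upwards [hℓ.eventually_gt_atTop 0, eventually_gt_atTop 0] with n hℓ0 hn
    exact div_pos hℓ0 (Nat.cast_pos.2 hn)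
  refine (hpos.inv_tendsto_nhdsGT_zero.const_mul_atTop hc).congr fun n => ?_
  rw [Pi.inv_apply, inv_div, mul_div_assoc]

lemma tendsto_natFloor_mul_natFloor_div (hc : 0 < c) (hℓ : Tendsto ℓ atTop atTop)
    (hℓn : Tendsto (fun n => ℓ n / n) atTop (𝓝 0)) :
    Tendsto (fun n => (⌊c * n / ℓ n⌋₊ : ℝ) * ⌊ℓ n⌋₊ / n) atTop (𝓝 c) := by
  have hlow : Tendsto (fun n => c - c / ℓ n - ℓ n / n) atTop (𝓝 c) := by
    simpa using (tendsto_const_nhds.sub (tendsto_const_nhds.div_atTop hℓ)).sub hℓn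
  refine tendsto_of_tendsto_of_tendsto_of_le_of_le' hlow tendsto_const_nhds ?_ ?_
  · filter_upwards [hℓ.eventually_ge_atTop 1,
      (tendsto_mul_natCast_div_atTop hc hℓ hℓn).eventually_ge_atTop 1, eventually_gt_atTop 0]
      with n hℓ1 hK1 hn
    have hn' : (0 : ℝ) < n := Nat.cast_pos.2 hn
    calc c - c / ℓ n - ℓ n / n ≤ (c * n / ℓ n - 1) * (ℓ n - 1) / n := by
          rw [le_div_iff₀ hn']
          field_simp
          nlinarith
      _ ≤ (⌊c * n / ℓ n⌋₊ : ℝ) * ⌊ℓ n⌋₊ / n := by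
          gcongr
          · exact (Nat.sub_one_lt_floor _).le
          · exact (Nat.sub_one_lt_floor _).le
  · filter_upwards [hℓ.eventually_gt_atTop 0, eventually_gt_atTop 0] with n hℓ0 hn
    calc (⌊c * n / ℓ n⌋₊ : ℝ) * ⌊ℓ n⌋₊ / n ≤ c * n / ℓ n * ℓ n / n := by
          gcongr
          · exact Nat.floor_le (by positivity)
          · exact Nat.floor_le hℓ0.le
      _ = c := by field_simp

end Asymptotics

theorem tendsto_measure_le_abs_card_islands_sub (K L : ℕ → ℕ) {c ε : ℝ} (hc : 0 < c)
    (hε : 0 < ε) (hL : Tendsto (fun n => (L n : ℝ) / n) atTop (𝓝 0))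
    (hK : Tendsto K atTop atTop) (hKL : Tendsto (fun n => (K n : ℝ) * L n / n) atTop (𝓝 c))
    {Ω : ℕ → Type*} [∀ n, MeasurableSpace (Ω n)] (μ : ∀ n, Measure (Ω n))
    [∀ n, IsProbabilityMeasure (μ n)] (T : ∀ n, Fin (K n) → Ω n → Fin n)
    (hmeas : ∀ n k, Measurable (T n k))
    (hunif : ∀ n, 0 < n → ∀ k t, μ n {ω | T n k ω = t} = (n : ENNReal)⁻¹)
    (hind : ∀ n, iIndepFun (T n) (μ n)) :
    Tendsto (fun n => μ n {ω | ε * (K n : ℝ) * exp (-c) ≤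
      |((univ.filter fun k => ∀ k', k' ≠ k → ¬ (T n k' ω - T n k ω : Fin n).val < L n).card : ℝ) -
        K n * exp (-c)|}) atTop (𝓝 0) := by
  have hp := tendsto_islandProb hL hK hKL
  have hKR : Tendsto (fun n => (K n : ℝ)) atTop atTop := tendsto_natCast_atTop_atTop.comp hK
  have hbound : Tendsto (fun n => (islandProb n (L n) (K n) / K n +
      (1 - 1 / K n) * islandPairProb n (L n) (K n) - islandProb n (L n) (K n) ^ 2) /
      (ε / 2 * exp (-c)) ^ 2) atTop (𝓝 0) := by
    have h1 : Tendsto (fun n => 1 - 1 / (K n : ℝ)) atTop (𝓝 (1 - 0)) :=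
      tendsto_const_nhds.sub (tendsto_const_nhds.div_atTop hKR)
    have h := (((hp.div_atTop hKR).add (h1.mul (tendsto_islandPairProb hL hK hKL))).sub
      (hp.pow 2)).div_const ((ε / 2 * exp (-c)) ^ 2)
    rwa [sub_zero, one_mul, zero_add, sub_self, zero_div] at h
  have hpclose : ∀ᶠ n in atTop, |islandProb n (L n) (K n) - exp (-c)| < ε / 2 * exp (-c) := by
    simpa [Real.dist_eq] using Metric.tendsto_nhds.1 hp _ (by positivity)
  refine tendsto_of_tendsto_of_tendsto_of_le_of_le' tendsto_const_nhds
    (ENNReal.ofReal_zero ▸ ENNReal.tendsto_ofReal hbound) (Eventually.of_forall fun _ => zero_le) ?_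
  filter_upwards [eventually_gt_atTop 0, hK.eventually_gt_atTop 0,
    eventually_pos_of_tendsto_mul_div hc hKL, eventually_two_mul_le_of_tendsto_div hL, hpclose]
    with n hn hK0 hL0 h2L hpc
  have : NeZero n := ⟨hn.ne'⟩
  have : Nonempty (Fin (K n)) := ⟨⟨0, hK0⟩⟩
  simpa only [Fintype.card_fin] using meas_ge_le_card_islands_of_abs_sub_lt (hmeas n) (hunif n hn)
    (hind n) hL0 h2L (exp_pos (-c)) hε (by simpa only [Fintype.card_fin] using hpc)

end ReadIslands

open ReadIslands in
theorem stmt13 (c Lb : ℝ) (hc : 0 < c) (hL : 1 < Lb) (ε : ℝ) (hε : 0 < ε)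
    (Ω : ℕ → Type) (mΩ : ∀ n, MeasurableSpace (Ω n))
    (μ : ∀ n, Measure (Ω n)) (hprob : ∀ n, IsProbabilityMeasure (μ n))
    (T : ∀ n : ℕ, Fin (⌊c * n / (Lb * Real.logb 2 n)⌋₊) → Ω n → Fin n)
    (hmeas : ∀ n k, Measurable (T n k))
    (hunif : ∀ n, 0 < n → ∀ k (t : Fin n), μ n {ω | T n k ω = t} = (n : ENNReal)⁻¹)
    (hind : ∀ n, iIndepFun (T n) (μ n)) :
    Tendsto (fun n : ℕ =>
      μ n {ω | ε * (⌊c * n / (Lb * Real.logb 2 n)⌋₊ : ℝ) * Real.exp (-c) ≤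
        |((Finset.univ.filter (fun k =>
            ∀ k', k' ≠ k → ¬ (T n k' ω - T n k ω : Fin n).val < ⌊Lb * Real.logb 2 n⌋₊)).card : ℝ) -
          (⌊c * n / (Lb * Real.logb 2 n)⌋₊ : ℝ) * Real.exp (-c)|})
      atTop (nhds 0) := by
  have hℓ : Tendsto (fun n : ℕ => Lb * logb 2 n) atTop atTop :=
    ((tendsto_logb_atTop one_lt_two).const_mul_atTop (by linarith)).comp
      tendsto_natCast_atTop_atTop
  have hℓn : Tendsto (fun n : ℕ => Lb * logb 2 n / n) atTop (𝓝 0) := by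
    have h := (isLittleO_log_id_atTop.tendsto_div_nhds_zero.comp
      tendsto_natCast_atTop_atTop).const_mul (Lb / log 2)
    rw [mul_zero] at h
    refine h.congr fun n => ?_
    simp only [Function.comp_apply, id, logb]
    ring
  exact tendsto_measure_le_abs_card_islands_sub _ _ hc hε (tendsto_natFloor_div_natCast hℓ hℓn)
    (tendsto_nat_floor_atTop.comp (tendsto_mul_natCast_div_atTop hc hℓ hℓn))
    (tendsto_natFloor_mul_natFloor_div hc hℓ hℓn) μ T hmeas hunif hind
end

section
/- For every c > 0 and L̄ > 1, (1 − e^{−c}) − (c/L̄)·e^{−c} > 1 − e^{−c(1−1/L̄)}. -/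
open Real

theorem stmt18 (c Lb : ℝ) (hc : 0 < c) (hL : 1 < Lb) :
    (1 - Real.exp (-c)) - (c / Lb) * Real.exp (-c) > 1 - Real.exp (-c * (1 - 1 / Lb)) := by
  have hLb : (0:ℝ) < Lb := lt_trans one_pos hL
  have hx : 0 < c / Lb := div_pos hc hLb
  have h1 : c / Lb + 1 < Real.exp (c / Lb) := Real.add_one_lt_exp (ne_of_gt hx)
  have h2 : -c * (1 - 1 / Lb) = -c + c / Lb := by field_simp; ring
  rw [h2, Real.exp_add]
  have he : 0 < Real.exp (-c) := Real.exp_pos _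
  nlinarith [mul_lt_mul_of_pos_left h1 he]
end
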